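/- arXiv:0811.2664 — 5 statements merged into one kernel-verified Lean document; each statement's English description precedes it below -/
import Mathlib

section
/- Let H ∈ (0,1) and let ψ : ℝ → ℝ be continuous with support in [0,1] satisfying ∫ψ = 0. Then the quantity C_ψ(H) := -(1/2)∫₀¹∫₀¹ ψ(x)ψ(x')|x-x'|^{2H} dx dx' is nonnegative. -/
/-!
For `0 < a < 2` the power `|t| ^ a` has the spectral representation
`|t| ^ a = c⁻¹ ∫_{u > 0} (1 - cos (t u)) / u ^ (1 + a) du`, where
`c = ∫_{u > 0} cosKernel a u > 0`; it is obtained by rescaling `u ↦ |t| u`.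
Inserting it into the double integral and exchanging the order of integration, for each
frequency `u` the inner double integral is
`(∫ ψ)² - (∫ ψ(x) cos (x u))² - (∫ ψ(x) sin (x u))²`,
since `cos ((x - y) u)` splits into a sum of two products. The vanishing zeroth moment kills
the first term, so the whole expression is `≤ 0`.
-/

open MeasureTheory Set Real

noncomputable def cosKernel (a u : ℝ) : ℝ := (1 - cos u) / u ^ (1 + a)

lemma cosKernel_nonneg (a : ℝ) {u : ℝ} (hu : 0 ≤ u) : 0 ≤ cosKernel a u :=
  div_nonneg (sub_nonneg.2 (cos_le_one u)) (rpow_nonneg hu _)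

lemma continuousOn_cosKernel (a : ℝ) : ContinuousOn (cosKernel a) (Ioi 0) := by
  unfold cosKernel
  exact (continuous_const.sub continuous_cos).continuousOn.div
    (continuousOn_id.rpow_const fun u hu => Or.inl (ne_of_gt hu))
    fun u hu => (rpow_pos_of_pos hu _).ne'

lemma integrableOn_cosKernel {a : ℝ} (ha0 : 0 < a) (ha2 : a < 2) :
    IntegrableOn (cosKernel a) (Ioi 0) := by
  have hmeas (s : Set ℝ) (hs : s ⊆ Ioi 0) (hsm : MeasurableSet s) :
      AEStronglyMeasurable (cosKernel a) (volume.restrict s) :=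
    ((continuousOn_cosKernel a).mono hs).aestronglyMeasurable hsm
  have hnear : IntegrableOn (cosKernel a) (Ioc 0 1) := by
    have hg : IntegrableOn (fun u : ℝ => u ^ (1 - a) / 2) (Ioc 0 1) :=
      ((intervalIntegral.intervalIntegrable_rpow' (by linarith)).1).div_const 2
    refine hg.mono' (hmeas _ Ioc_subset_Ioi_self measurableSet_Ioc) ?_
    refine (ae_restrict_iff' measurableSet_Ioc).2 (.of_forall fun u hu => ?_)
    rw [norm_of_nonneg (cosKernel_nonneg a hu.1.le), cosKernel,
      show 1 - a = 2 - (1 + a) by ring, rpow_sub hu.1, rpow_two, div_right_comm,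
      div_le_div_iff_of_pos_right (rpow_pos_of_pos hu.1 _)]
    linarith [one_sub_sq_div_two_le_cos (x := u)]
  have hfar : IntegrableOn (cosKernel a) (Ioi 1) := by
    have hg : IntegrableOn (fun u : ℝ => 2 * u ^ (-(1 + a))) (Ioi 1) :=
      (integrableOn_Ioi_rpow_of_lt (by linarith) one_pos).const_mul 2
    refine hg.mono' (hmeas _ (Ioi_subset_Ioi zero_le_one) measurableSet_Ioi) ?_
    refine (ae_restrict_iff' measurableSet_Ioi).2 (.of_forall fun u (hu : 1 < u) => ?_)
    have hu0 : 0 < u := one_pos.trans hu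
    rw [norm_of_nonneg (cosKernel_nonneg a hu0.le), cosKernel, rpow_neg hu0.le, ← div_eq_mul_inv,
      div_le_div_iff_of_pos_right (rpow_pos_of_pos hu0 _)]
    linarith [neg_one_le_cos u]
  simpa [Ioc_union_Ioi_eq_Ioi zero_le_one] using hnear.union hfar

lemma integral_cosKernel_pos {a : ℝ} (ha0 : 0 < a) (ha2 : a < 2) :
    0 < ∫ u in Ioi 0, cosKernel a u := by
  rw [setIntegral_pos_iff_support_of_nonneg_ae
    ((ae_restrict_iff' measurableSet_Ioi).2 (.of_forall fun u hu => cosKernel_nonneg a hu.le))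
    (integrableOn_cosKernel ha0 ha2)]
  refine lt_of_lt_of_le ?_ (measure_mono (s := Ioo 0 π) fun u hu => ⟨?_, hu.1⟩)
  · simp [pi_pos]
  · have hcos : cos u ≠ 1 := fun h => hu.1.ne' <|
      (cos_eq_one_iff_of_lt_of_lt (by linarith [hu.1, pi_pos]) (by linarith [hu.2, pi_pos])).1 h
    exact div_ne_zero (sub_ne_zero.2 hcos.symm) (rpow_pos_of_pos hu.1 _).ne'

lemma one_sub_cos_mul_div_rpow_eq {a : ℝ} (ha : 0 < a) (t : ℝ) {u : ℝ} (hu : 0 < u) :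
    (1 - cos (t * u)) / u ^ (1 + a) = |t| ^ (1 + a) * cosKernel a (|t| * u) := by
  rcases eq_or_ne t 0 with rfl | ht
  · simp [zero_rpow (by linarith : (1 + a) ≠ 0)]
  · rw [cosKernel, mul_rpow (abs_nonneg t) hu.le, ← cos_abs (t * u), abs_mul, abs_of_pos hu]
    field_simp [(rpow_pos_of_pos (abs_pos.2 ht) (1 + a)).ne']

lemma integrableOn_one_sub_cos_mul_div_rpow {a : ℝ} (ha0 : 0 < a) (ha2 : a < 2) (t : ℝ) :
    IntegrableOn (fun u => (1 - cos (t * u)) / u ^ (1 + a)) (Ioi 0) := by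
  refine IntegrableOn.congr_fun ?_ (fun u hu => (one_sub_cos_mul_div_rpow_eq ha0 t hu).symm)
    measurableSet_Ioi
  rcases eq_or_ne t 0 with rfl | ht
  · simp [zero_rpow (by linarith : (1 + a) ≠ 0)]
  · have h := (integrableOn_Ioi_comp_mul_left_iff _ 0 (abs_pos.2 ht)).2
      (by rw [mul_zero]; exact integrableOn_cosKernel ha0 ha2)
    exact h.const_mul _

lemma integral_one_sub_cos_mul_div_rpow {a : ℝ} (ha0 : 0 < a) (t : ℝ) :
    ∫ u in Ioi 0, (1 - cos (t * u)) / u ^ (1 + a) = |t| ^ a * ∫ u in Ioi 0, cosKernel a u := by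
  rcases eq_or_ne t 0 with rfl | ht
  · simp [zero_rpow ha0.ne']
  · have hc : 0 < |t| := abs_pos.2 ht
    rw [setIntegral_congr_fun measurableSet_Ioi fun u hu => one_sub_cos_mul_div_rpow_eq ha0 t hu,
      integral_const_mul, integral_comp_mul_left_Ioi _ _ hc, mul_zero, smul_eq_mul, ← mul_assoc,
      rpow_add hc, rpow_one, mul_comm |t|, mul_inv_cancel_right₀ hc.ne']

section PositiveDefinite

variable {μ : Measure ℝ} {ψ : ℝ → ℝ}

lemma integrable_mul_cos_mul (hψ : Integrable ψ μ) (u : ℝ) :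
    Integrable (fun x => ψ x * cos (x * u)) μ :=
  hψ.mul_bdd (by fun_prop : Measurable fun x => cos (x * u)).aestronglyMeasurable
    (c := 1) (.of_forall fun x => by simpa using abs_cos_le_one (x * u))

lemma integrable_mul_sin_mul (hψ : Integrable ψ μ) (u : ℝ) :
    Integrable (fun x => ψ x * sin (x * u)) μ :=
  hψ.mul_bdd (by fun_prop : Measurable fun x => sin (x * u)).aestronglyMeasurable
    (c := 1) (.of_forall fun x => by simpa using abs_sin_le_one (x * u))

lemma integral_mul_mul_cos_sub_mul [SFinite μ] (hψ : Integrable ψ μ) (u : ℝ) :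
    ∫ p, ψ p.1 * ψ p.2 * cos ((p.1 - p.2) * u) ∂μ.prod μ
      = (∫ x, ψ x * cos (x * u) ∂μ) ^ 2 + (∫ x, ψ x * sin (x * u) ∂μ) ^ 2 := by
  have hsplit : ∀ p : ℝ × ℝ, ψ p.1 * ψ p.2 * cos ((p.1 - p.2) * u)
      = ψ p.1 * cos (p.1 * u) * (ψ p.2 * cos (p.2 * u))
        + ψ p.1 * sin (p.1 * u) * (ψ p.2 * sin (p.2 * u)) := fun p => by
    rw [sub_mul, cos_sub]; ring
  simp_rw [hsplit]
  rw [integral_add ((integrable_mul_cos_mul hψ u).mul_prod (integrable_mul_cos_mul hψ u))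
    ((integrable_mul_sin_mul hψ u).mul_prod (integrable_mul_sin_mul hψ u)),
    integral_prod_mul (fun x => ψ x * cos (x * u)) (fun x => ψ x * cos (x * u)),
    integral_prod_mul (fun x => ψ x * sin (x * u)) (fun x => ψ x * sin (x * u))]
  ring

lemma integral_mul_mul_one_sub_cos_sub_mul_nonpos [SFinite μ] (hψ : Integrable ψ μ)
    (hψ0 : ∫ x, ψ x ∂μ = 0) (u : ℝ) :
    ∫ p, ψ p.1 * ψ p.2 * (1 - cos ((p.1 - p.2) * u)) ∂μ.prod μ ≤ 0 := by
  have hψψ : Integrable (fun p : ℝ × ℝ => ψ p.1 * ψ p.2) (μ.prod μ) := hψ.mul_prod hψ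
  have hcos :
      Integrable (fun p : ℝ × ℝ => ψ p.1 * ψ p.2 * cos ((p.1 - p.2) * u)) (μ.prod μ) :=
    hψψ.mul_bdd (c := 1)
      (by fun_prop : Measurable fun p : ℝ × ℝ => cos ((p.1 - p.2) * u)).aestronglyMeasurable
      (.of_forall fun p => by simpa using abs_cos_le_one ((p.1 - p.2) * u))
  simp_rw [mul_one_sub]
  rw [integral_sub hψψ hcos, integral_prod_mul ψ ψ, hψ0, integral_mul_mul_cos_sub_mul hψ]
  simp only [mul_zero, zero_sub, neg_nonpos]
  positivity

end PositiveDefinite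

section NegativeDefinite

variable {μ : Measure ℝ} {ψ : ℝ → ℝ} {a : ℝ}

lemma integrable_mul_mul_one_sub_cos_div_rpow (ha0 : 0 < a) (ha2 : a < 2)
    (hψ : AEMeasurable ψ μ)
    (hψa : Integrable (fun p : ℝ × ℝ => ψ p.1 * ψ p.2 * |p.1 - p.2| ^ a) (μ.prod μ)) :
    Integrable (fun q : (ℝ × ℝ) × ℝ =>
        ψ q.1.1 * ψ q.1.2 * (1 - cos ((q.1.1 - q.1.2) * q.2)) / q.2 ^ (1 + a))
      ((μ.prod μ).prod (volume.restrict (Ioi 0))) := by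
  refine (integrable_prod_iff ?_).2 ⟨.of_forall fun p => ?_, ?_⟩
  · have hcos : Measurable fun q : (ℝ × ℝ) × ℝ => 1 - cos ((q.1.1 - q.1.2) * q.2) := by
      fun_prop
    have hpow : Measurable fun q : (ℝ × ℝ) × ℝ => q.2 ^ (1 + a) := by fun_prop
    exact ((((hψ.comp_fst.mul hψ.comp_snd).comp_fst).mul hcos.aemeasurable).div
      hpow.aemeasurable).aestronglyMeasurable
  · simp_rw [mul_div_assoc]
    exact (integrableOn_one_sub_cos_mul_div_rpow ha0 ha2 (p.1 - p.2)).const_mul _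
  · refine (hψa.norm.mul_const (∫ u in Ioi 0, cosKernel a u)).congr (.of_forall fun p => ?_)
    have hnorm : ∀ u ∈ Ioi (0 : ℝ),
        ‖ψ p.1 * ψ p.2 * (1 - cos ((p.1 - p.2) * u)) / u ^ (1 + a)‖
          = |ψ p.1 * ψ p.2| * ((1 - cos ((p.1 - p.2) * u)) / u ^ (1 + a)) :=
      fun u (hu : 0 < u) => by
        rw [mul_div_assoc, norm_mul, norm_of_nonneg (div_nonneg (sub_nonneg.2 (cos_le_one _))
          (rpow_nonneg hu.le _)), Real.norm_eq_abs]
    dsimp only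
    rw [setIntegral_congr_fun measurableSet_Ioi hnorm, integral_const_mul,
      integral_one_sub_cos_mul_div_rpow ha0, norm_mul, Real.norm_eq_abs,
      norm_of_nonneg (rpow_nonneg (abs_nonneg _) _), mul_assoc]

theorem integral_mul_mul_abs_sub_rpow_nonpos [SFinite μ] (ha0 : 0 < a) (ha2 : a < 2)
    (hψ : Integrable ψ μ)
    (hψa : Integrable (fun p : ℝ × ℝ => ψ p.1 * ψ p.2 * |p.1 - p.2| ^ a) (μ.prod μ))
    (hψ0 : ∫ x, ψ x ∂μ = 0) :
    ∫ p, ψ p.1 * ψ p.2 * |p.1 - p.2| ^ a ∂μ.prod μ ≤ 0 := by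
  set F : ℝ × ℝ → ℝ → ℝ :=
    fun p u => ψ p.1 * ψ p.2 * (1 - cos ((p.1 - p.2) * u)) / u ^ (1 + a)
  have hfiber : ∀ p : ℝ × ℝ, ∫ u in Ioi 0, F p u
      = ψ p.1 * ψ p.2 * |p.1 - p.2| ^ a * ∫ u in Ioi 0, cosKernel a u := fun p => by
    simp only [F, mul_div_assoc]
    rw [integral_const_mul, integral_one_sub_cos_mul_div_rpow ha0]
    ring
  have hslice : ∀ u ∈ Ioi (0 : ℝ), ∫ p, F p u ∂μ.prod μ ≤ 0 := by
    intro u (hu : 0 < u)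
    simp only [F]
    rw [integral_div]
    exact div_nonpos_of_nonpos_of_nonneg
      (integral_mul_mul_one_sub_cos_sub_mul_nonpos hψ hψ0 u) (rpow_nonneg hu.le _)
  have hprod :
      (∫ p, ψ p.1 * ψ p.2 * |p.1 - p.2| ^ a ∂μ.prod μ) *
        ∫ u in Ioi 0, cosKernel a u ≤ 0 :=
    calc _ = ∫ p, (∫ u in Ioi 0, F p u) ∂μ.prod μ := by
          rw [← integral_mul_const]; simp only [hfiber]
      _ = ∫ u in Ioi 0, (∫ p, F p u ∂μ.prod μ) := integral_integral_swap
          (integrable_mul_mul_one_sub_cos_div_rpow ha0 ha2 hψ.aemeasurable hψa)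
      _ ≤ 0 := setIntegral_nonpos measurableSet_Ioi hslice
  exact nonpos_of_mul_nonpos_left hprod (integral_cosKernel_pos ha0 ha2)

end NegativeDefinite

theorem stmt0_general (H : ℝ) (hH : H ∈ Set.Ioo (0:ℝ) 1)
    (ψ : ℝ → ℝ) (hψc : Continuous ψ)
    (hψ0 : ∫ t in (0:ℝ)..1, ψ t = 0) :
    0 ≤ -(1/2) * ∫ x in (0:ℝ)..1, ∫ y in (0:ℝ)..1, ψ x * ψ y * |x - y| ^ (2*H) := by
  set μ := volume.restrict (Ioc (0 : ℝ) 1)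
  have hcont : Continuous fun p : ℝ × ℝ => ψ p.1 * ψ p.2 * |p.1 - p.2| ^ (2 * H) :=
    (by fun_prop : Continuous fun p : ℝ × ℝ => ψ p.1 * ψ p.2).mul
      ((by fun_prop : Continuous fun p : ℝ × ℝ => |p.1 - p.2|).rpow_const
        fun _ => Or.inr (by linarith [hH.1]))
  have hint :
      Integrable (fun p : ℝ × ℝ => ψ p.1 * ψ p.2 * |p.1 - p.2| ^ (2 * H)) (μ.prod μ) := by
    rw [Measure.prod_restrict, ← Measure.volume_eq_prod]
    exact (hcont.continuousOn.integrableOn_compact (isCompact_Icc.prod isCompact_Icc)).mono_set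
      (prod_mono Ioc_subset_Icc_self Ioc_subset_Icc_self)
  have hnonpos := integral_mul_mul_abs_sub_rpow_nonpos (by linarith [hH.1]) (by linarith [hH.2])
    hψc.integrableOn_Ioc hint (by rwa [← intervalIntegral.integral_of_le zero_le_one])
  rw [integral_prod _ hint] at hnonpos
  simp only [intervalIntegral.integral_of_le zero_le_one]
  linarith

theorem stmt0 (H : ℝ) (hH : H ∈ Set.Ioo (0:ℝ) 1)
    (ψ : ℝ → ℝ) (hψc : Continuous ψ)
    (hψs : Function.support ψ ⊆ Set.Icc 0 1)
    (hψ0 : ∫ t in (0:ℝ)..1, ψ t = 0) :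
    0 ≤ -(1/2) * ∫ x in (0:ℝ)..1, ∫ y in (0:ℝ)..1, ψ x * ψ y * |x - y| ^ (2*H) :=
  stmt0_general H hH ψ hψc hψ0
end

section
/- Let ψ be continuous with support in [0,1], ∫₀¹ψ = 0, and H ∈ (0,1), Q ≥ 1 vanishing moments. If Q ≥ 2, or if Q = 1 and H < 3/4, then the series Σ_{k∈ℤ} (∫₀¹∫₀¹ ψ(x)ψ(x')|x-x'+k|^{2H} dx dx')² converges absolutely. -/
open MeasureTheory

/-!
For `|k| ≥ 2` and `x, y ∈ [0, 1]` we have `|x - y + k| = σ (x - y) + |k|` with `σ = sign k`, and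
`u ↦ u ^ (2H)` is smooth on `[|k| - 1, |k| + 1]`. Its Taylor polynomial of order `2Q - 1` at
`|k| - 1` is a polynomial of degree `< 2Q` in `x - y`; every monomial `x ^ a * y ^ b` in it has
`a < Q` or `b < Q`, so the vanishing moments of `ψ` kill its contribution. What is left is the
Taylor remainder, of size `O(|k| ^ (2H - 2Q))`, and its square is summable over `ℤ` exactly when
`4 (Q - H) > 1`, which is what the hypothesis on `Q` and `H` guarantees.
-/

open Finset
open scoped Nat

noncomputable def kernelPairing (ψ g : ℝ → ℝ) : ℝ :=
  ∫ x in (0:ℝ)..1, ∫ y in (0:ℝ)..1, ψ x * ψ y * g (x - y)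

theorem integral_integral_finsetSum {ι : Type*} (s : Finset ι) {F : ι → ℝ → ℝ → ℝ}
    (hF : ∀ i ∈ s, Continuous (Function.uncurry (F i))) (a b c d : ℝ) :
    ∫ x in a..b, ∫ y in c..d, ∑ i ∈ s, F i x y = ∑ i ∈ s, ∫ x in a..b, ∫ y in c..d, F i x y := by
  have hcont (i) (hi : i ∈ s) (x : ℝ) : Continuous (F i x) := (hF i hi).uncurry_left x
  simp_rw [intervalIntegral.integral_finsetSum fun i hi => (hcont i hi _).intervalIntegrable c d]
  exact intervalIntegral.integral_finsetSum fun i hi =>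
    (intervalIntegral.continuous_parametric_intervalIntegral_of_continuous' (hF i hi) c d
      ).intervalIntegrable a b

section Moments

variable {Q : ℕ} {ψ : ℝ → ℝ}

theorem integral_affine_pow_mul_eq_zero (hψ : Continuous ψ)
    (hmom : ∀ p : ℕ, p < Q → ∫ t in (0:ℝ)..1, t ^ p * ψ t = 0) (σ c : ℝ) {j : ℕ} (hj : j < Q) :
    ∫ x in (0:ℝ)..1, (σ * x + c) ^ j * ψ x = 0 := by
  have hexpand (x : ℝ) : (σ * x + c) ^ j * ψ x
      = ∑ l ∈ range (j + 1), (σ ^ l * c ^ (j - l) * j.choose l) * (x ^ l * ψ x) := by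
    rw [add_pow, sum_mul]
    exact sum_congr rfl fun l _ => by ring
  simp_rw [hexpand]
  rw [intervalIntegral.integral_finsetSum fun l _ =>
    (by fun_prop : Continuous _).intervalIntegrable 0 1]
  refine sum_eq_zero fun l hl => ?_
  rw [intervalIntegral.integral_const_mul, hmom l (by grind), mul_zero]

theorem kernelPairing_affine_pow_eq_zero (hψ : Continuous ψ)
    (hmom : ∀ p : ℕ, p < Q → ∫ t in (0:ℝ)..1, t ^ p * ψ t = 0) (σ c : ℝ) {i : ℕ} (hi : i < 2 * Q) :
    kernelPairing ψ (fun t => (σ * t + c) ^ i) = 0 := by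
  have hexpand (x y : ℝ) : ψ x * ψ y * (σ * (x - y) + c) ^ i
      = ∑ j ∈ range (i + 1), (-σ) ^ (i - j) * i.choose j *
          (((σ * x + c) ^ j * ψ x) * (y ^ (i - j) * ψ y)) := by
    rw [show σ * (x - y) + c = (σ * x + c) + -σ * y by ring, add_pow, mul_sum]
    exact sum_congr rfl fun j _ => by ring
  -- each term vanishes, in `x` if `j < Q` and in `y` otherwise
  simp_rw [kernelPairing, hexpand]
  rw [integral_integral_finsetSum _ fun j _ => by fun_prop]
  refine sum_eq_zero fun j hj => ?_
  simp only [intervalIntegral.integral_const_mul, intervalIntegral.integral_mul_const]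
  rcases lt_or_ge j Q with hjQ | hjQ
  · rw [integral_affine_pow_mul_eq_zero hψ hmom σ c hjQ]; ring
  · rw [hmom (i - j) (by grind)]; ring

end Moments

theorem sub_mem_Icc_neg_one_one {x y : ℝ} (hx : x ∈ Set.Icc (0:ℝ) 1) (hy : y ∈ Set.Icc (0:ℝ) 1) :
    x - y ∈ Set.Icc (-1:ℝ) 1 :=
  ⟨by linarith [hx.1, hy.2], by linarith [hx.2, hy.1]⟩

section Pairing

variable {ψ : ℝ → ℝ}

theorem kernelPairing_congr {g h : ℝ → ℝ} (hgh : Set.EqOn g h (Set.Icc (-1) 1)) :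
    kernelPairing ψ g = kernelPairing ψ h := by
  refine intervalIntegral.integral_congr fun x hx => intervalIntegral.integral_congr fun y hy => ?_
  rw [Set.uIcc_of_le zero_le_one] at hx hy
  simp only [hgh (sub_mem_Icc_neg_one_one hx hy)]

theorem kernelPairing_sub (hψ : Continuous ψ) {g h : ℝ → ℝ} (hg : Continuous g)
    (hh : Continuous h) :
    kernelPairing ψ (g - h) = kernelPairing ψ g - kernelPairing ψ h := by
  simp only [kernelPairing, Pi.sub_apply, mul_sub]
  rw [← intervalIntegral.integral_sub (Continuous.intervalIntegrable (by fun_prop) _ _)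
    (Continuous.intervalIntegrable (by fun_prop) _ _)]
  congr with x
  exact intervalIntegral.integral_sub (Continuous.intervalIntegrable (by fun_prop) _ _)
    (Continuous.intervalIntegrable (by fun_prop) _ _)

theorem kernelPairing_sum_mul (hψ : Continuous ψ) {ι : Type*} (s : Finset ι) (c : ι → ℝ)
    {g : ι → ℝ → ℝ} (hg : ∀ i ∈ s, Continuous (g i)) :
    kernelPairing ψ (fun t => ∑ i ∈ s, c i * g i t) = ∑ i ∈ s, c i * kernelPairing ψ (g i) := by
  simp only [kernelPairing, mul_sum, mul_left_comm _ (c _)]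
  rw [integral_integral_finsetSum s fun i hi => by have := hg i hi; fun_prop]
  simp only [intervalIntegral.integral_const_mul]

theorem abs_kernelPairing_le {M C : ℝ} (hM : ∀ t ∈ Set.Icc (0:ℝ) 1, |ψ t| ≤ M) {g : ℝ → ℝ}
    (hg : ∀ t ∈ Set.Icc (-1:ℝ) 1, |g t| ≤ C) :
    |kernelPairing ψ g| ≤ M * M * C := by
  have hM0 : 0 ≤ M := (abs_nonneg _).trans (hM 0 (by simp))
  have hIoc {t : ℝ} (ht : t ∈ Set.uIoc 0 1) : t ∈ Set.Icc (0:ℝ) 1 := by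
    rw [Set.uIoc_of_le zero_le_one] at ht; exact Set.Ioc_subset_Icc_self ht
  have hinner (x) (hx : x ∈ Set.uIoc (0:ℝ) 1) :
      ‖∫ y in (0:ℝ)..1, ψ x * ψ y * g (x - y)‖ ≤ M * M * C := by
    have hbound (y) (hy : y ∈ Set.uIoc (0:ℝ) 1) : ‖ψ x * ψ y * g (x - y)‖ ≤ M * M * C := by
      rw [Real.norm_eq_abs, abs_mul, abs_mul]
      gcongr
      exacts [hM x (hIoc hx), hM y (hIoc hy), hg _ (sub_mem_Icc_neg_one_one (hIoc hx) (hIoc hy))]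
    simpa using intervalIntegral.norm_integral_le_of_norm_le_const hbound
  simpa [kernelPairing] using intervalIntegral.norm_integral_le_of_norm_le_const hinner

end Pairing

theorem abs_rpow_sub_taylorWithinEval_le {p a b u : ℝ} (n : ℕ) (ha : 0 < a) (hab : a < b)
    (hpn : p ≤ n + 1) (hu : u ∈ Set.Icc a b) :
    |u ^ p - taylorWithinEval (fun s => s ^ p) n (Set.Icc a b) a u|
      ≤ |(descPochhammer ℝ (n + 1)).eval p| * a ^ (p - (n + 1)) * (b - a) ^ (n + 1) / n ! := by
  have hcd : ContDiffOn ℝ (n + 1) (fun s : ℝ => s ^ p) (Set.Icc a b) := fun t ht =>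
    (Real.contDiffAt_rpow_const_of_ne (ha.trans_le ht.1).ne').contDiffWithinAt
  have hderiv : ∀ t ∈ Set.Icc a b,
      ‖iteratedDerivWithin (n + 1) (fun s : ℝ => s ^ p) (Set.Icc a b) t‖
        ≤ |(descPochhammer ℝ (n + 1)).eval p| * a ^ (p - (n + 1)) := by
    intro t ht
    have ht0 : 0 < t := ha.trans_le ht.1
    rw [iteratedDerivWithin_eq_iteratedDeriv (uniqueDiffOn_Icc hab)
      (Real.contDiffAt_rpow_const_of_ne ht0.ne') ht, iteratedDeriv_eq_iterate,
      Real.iter_deriv_rpow_const, Real.norm_eq_abs, abs_mul,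
      abs_of_pos (Real.rpow_pos_of_pos ht0 _)]
    push_cast
    exact mul_le_mul_of_nonneg_left (Real.rpow_le_rpow_of_nonpos ha ht.1 (by linarith))
      (abs_nonneg _)
  calc |u ^ p - taylorWithinEval (fun s => s ^ p) n (Set.Icc a b) a u|
      ≤ |(descPochhammer ℝ (n + 1)).eval p| * a ^ (p - (n + 1)) * (u - a) ^ (n + 1) / n ! :=
        taylor_mean_remainder_bound hab.le hcd hu hderiv
    _ ≤ _ := by gcongr; exacts [sub_nonneg.2 hu.1, hu.2]

theorem abs_add_eq_sign_mul_add_abs {t r : ℝ} (h : |t| ≤ |r|) :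
    |t + r| = SignType.sign r * t + |r| := by
  rcases lt_trichotomy r 0 with hr | rfl | hr
  · rw [abs_of_neg hr] at h ⊢
    rw [abs_of_nonpos (by linarith [le_abs_self t]), sign_neg hr]
    simp only [SignType.coe_neg_one]; ring
  · simp_all
  · rw [abs_of_pos hr] at h ⊢
    rw [abs_of_nonneg (by linarith [neg_abs_le t]), sign_pos hr]
    simp only [SignType.coe_one]; ring

theorem rpow_sub_one_le {m e : ℝ} (hm : 2 ≤ m) (he : e ≤ 0) : (m - 1) ^ e ≤ 2 ^ (-e) * m ^ e := by
  calc (m - 1) ^ e ≤ (m / 2) ^ e := Real.rpow_le_rpow_of_nonpos (by positivity) (by linarith) he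
    _ = 2 ^ (-e) * m ^ e := by
      rw [Real.div_rpow (by linarith) zero_le_two, Real.rpow_neg zero_le_two, div_eq_inv_mul]

section Decay

variable {Q : ℕ} {ψ : ℝ → ℝ} {M : ℝ}

theorem abs_kernelPairing_affine_rpow_le (hψ : Continuous ψ)
    (hmom : ∀ p : ℕ, p < Q → ∫ t in (0:ℝ)..1, t ^ p * ψ t = 0)
    (hM : ∀ t ∈ Set.Icc (0:ℝ) 1, |ψ t| ≤ M) {p : ℝ} (hp : 0 ≤ p) {n : ℕ} (hn : n < 2 * Q)
    (hpn : p ≤ n + 1) {σ m : ℝ} (hσ : |σ| ≤ 1) (hm : 1 < m) :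
    |kernelPairing ψ (fun t => (σ * t + m) ^ p)|
      ≤ M * M *
          (|(descPochhammer ℝ (n + 1)).eval p| * (m - 1) ^ (p - (n + 1)) * 2 ^ (n + 1) / n !) := by
  set T := taylorWithinEval (fun s : ℝ => s ^ p) n (Set.Icc (m - 1) (m + 1)) (m - 1)
  have hT : (fun t => T (σ * t + m)) = fun t => ∑ k ∈ range (n + 1),
      ((k ! : ℝ)⁻¹ * iteratedDerivWithin k (fun s : ℝ => s ^ p) (Set.Icc (m - 1) (m + 1)) (m - 1))
        * (σ * t + 1) ^ k := by
    ext t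
    simp only [T, taylor_within_apply, smul_eq_mul]
    exact sum_congr rfl fun k _ => by ring
  have hTcont : Continuous fun t => T (σ * t + m) := by rw [hT]; fun_prop
  have hT0 : kernelPairing ψ (fun t => T (σ * t + m)) = 0 := by
    rw [hT, kernelPairing_sum_mul hψ _ _ fun k _ => by fun_prop]
    exact sum_eq_zero fun k hk =>
      by rw [kernelPairing_affine_pow_eq_zero hψ hmom σ 1 (by grind), mul_zero]
  have hmem {t : ℝ} (ht : t ∈ Set.Icc (-1:ℝ) 1) : σ * t + m ∈ Set.Icc (m - 1) (m + 1) := by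
    have : |σ * t| ≤ 1 := by
      rw [abs_mul]; exact mul_le_one₀ hσ (abs_nonneg _) (abs_le.2 ht)
    constructor <;> linarith [abs_le.1 this]
  calc |kernelPairing ψ (fun t => (σ * t + m) ^ p)|
      = |kernelPairing ψ ((fun t => (σ * t + m) ^ p) - fun t => T (σ * t + m))| := by
        rw [kernelPairing_sub hψ (by fun_prop) hTcont, hT0, sub_zero]
    _ ≤ _ := by
        refine abs_kernelPairing_le hM fun t ht => ?_
        have := abs_rpow_sub_taylorWithinEval_le n (by linarith) (by linarith) hpn (hmem ht)
        rwa [show m + 1 - (m - 1) = 2 by ring] at this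

theorem exists_abs_kernelPairing_abs_add_rpow_le (hψ : Continuous ψ)
    (hmom : ∀ p : ℕ, p < Q → ∫ t in (0:ℝ)..1, t ^ p * ψ t = 0)
    (hM : ∀ t ∈ Set.Icc (0:ℝ) 1, |ψ t| ≤ M) {p : ℝ} (hp : 0 ≤ p) {n : ℕ} (hn : n < 2 * Q)
    (hpn : p ≤ n + 1) :
    ∃ C, ∀ r : ℝ, 2 ≤ |r| →
      |kernelPairing ψ (fun t => |t + r| ^ p)| ≤ C * |r| ^ (p - (n + 1)) := by
  refine ⟨M * M * (|(descPochhammer ℝ (n + 1)).eval p| * 2 ^ (n + 1) / n !) * 2 ^ (n + 1 - p),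
    fun r hr => ?_⟩
  have hσ : |(SignType.sign r : ℝ)| ≤ 1 := by
    rcases lt_trichotomy r 0 with h | rfl | h <;> simp [*]
  have hM0 : 0 ≤ M := (abs_nonneg _).trans (hM 0 (by simp))
  rw [kernelPairing_congr (h := fun t => (SignType.sign r * t + |r|) ^ p) fun t ht => by
    rw [abs_add_eq_sign_mul_add_abs ((abs_le.2 ht).trans (by linarith))]]
  refine (abs_kernelPairing_affine_rpow_le hψ hmom hM hp hn hpn hσ (by linarith)).trans ?_
  have := rpow_sub_one_le hr (show p - (n + 1) ≤ 0 by linarith)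
  rw [neg_sub] at this
  calc _ = M * M * (|(descPochhammer ℝ (n + 1)).eval p| * 2 ^ (n + 1) / n !)
        * (|r| - 1) ^ (p - (n + 1)) := by ring
    _ ≤ _ := by rw [mul_assoc _ (2 ^ _)]; gcongr

end Decay

theorem summable_sq_of_abs_le_mul_abs_rpow {f : ℤ → ℝ} {C s : ℝ} (hs : 1 < 2 * s)
    (hf : ∀ᶠ k in Filter.cofinite, |f k| ≤ C * |(k:ℝ)| ^ (-s)) :
    Summable fun k => f k ^ 2 := by
  refine Summable.of_norm_bounded_eventually ((Real.summable_abs_int_rpow hs).mul_left (C ^ 2)) ?_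
  filter_upwards [hf] with k hk
  calc ‖f k ^ 2‖ = |f k| ^ 2 := by simp
    _ ≤ (C * |(k:ℝ)| ^ (-s)) ^ 2 := pow_le_pow_left₀ (abs_nonneg _) hk 2
    _ = C ^ 2 * |(k:ℝ)| ^ (-(2 * s)) := by
      rw [mul_pow, ← Real.rpow_mul_natCast (abs_nonneg _)]
      ring_nf

theorem stmt4_general (H : ℝ) (hH : H ∈ Set.Ioo (0:ℝ) 1) (Q : ℕ)
    (hQ : 2 ≤ Q ∨ (Q = 1 ∧ H < 3/4))
    (ψ : ℝ → ℝ) (hψc : Continuous ψ)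
    (hmom : ∀ p : ℕ, p < Q → ∫ t in (0:ℝ)..1, t ^ p * ψ t = 0) :
    Summable (fun k : ℤ =>
      (∫ x in (0:ℝ)..1, ∫ y in (0:ℝ)..1, ψ x * ψ y * |x - y + (k:ℝ)| ^ (2*H)) ^ 2) := by
  obtain ⟨hH0, hH1⟩ := hH
  obtain ⟨M, hM⟩ := isCompact_Icc.exists_bound_of_continuousOn (hψc.continuousOn (s := Set.Icc 0 1))
  simp only [Real.norm_eq_abs] at hM
  obtain ⟨n, hn⟩ : ∃ n : ℕ, n + 1 = 2 * Q := ⟨2 * Q - 1, by omega⟩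
  have hn' : (n : ℝ) + 1 = 2 * Q := by exact_mod_cast hn
  have hQ1 : (1 : ℝ) ≤ Q := by exact_mod_cast (show 1 ≤ Q by omega)
  obtain ⟨C, hC⟩ := exists_abs_kernelPairing_abs_add_rpow_le hψc hmom hM (p := 2 * H)
    (by linarith) (show n < 2 * Q by omega) (by linarith)
  have hs : 1 < 2 * ((n : ℝ) + 1 - 2 * H) := by
    rcases hQ with hQ | ⟨rfl, hH34⟩
    · have : (2 : ℝ) ≤ Q := by exact_mod_cast hQ
      linarith
    · push_cast at hn'; linarith
  refine summable_sq_of_abs_le_mul_abs_rpow (C := C) hs ?_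
  filter_upwards
    [(tendsto_norm_cocompact_atTop.comp Int.tendsto_coe_cofinite).eventually_ge_atTop 2] with k hk
  rw [neg_sub]
  exact hC k (by simpa using hk)

theorem stmt4 (H : ℝ) (hH : H ∈ Set.Ioo (0:ℝ) 1) (Q : ℕ)
    (hQ : 2 ≤ Q ∨ (Q = 1 ∧ H < 3/4))
    (ψ : ℝ → ℝ) (hψc : Continuous ψ) (hψs : Function.support ψ ⊆ Set.Icc 0 1)
    (hmom : ∀ p : ℕ, p < Q → ∫ t in (0:ℝ)..1, t ^ p * ψ t = 0) :
    Summable (fun k : ℤ =>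
      (∫ x in (0:ℝ)..1, ∫ y in (0:ℝ)..1, ψ x * ψ y * |x - y + (k:ℝ)| ^ (2*H)) ^ 2) :=
  stmt4_general H hH Q hQ ψ hψc hmom
end

section
/- For H ∈ (3/4, 1) and k ≥ 2, the integral ∫_{[0,1]^k} (|x₁-x₂|·|x₂-x₃|⋯|x_{k-1}-x_k|·|x_k-x₁|)^{2H-2} dx₁⋯dx_k is finite. -/
/-!
Put `γ = (2H - 2) k / (k - 1)`; since `2H - 2 > -1/2` and `k / (k - 1) ≤ 2`, we have `-1 < γ < 0`.
Deleting one factor from the cyclic product of the `bⱼ = |xⱼ - xⱼ₊₁| ^ γ` leaves an open chain, and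
the leave-one-out AM–GM inequality `∏ bⱼ ^ (1 - 1/k) ≤ (1/k) ∑ᵢ ∏_{j ≠ i} bⱼ` bounds the integrand
by the average of these `k` chains. After a cyclic relabelling of the coordinates each chain is a
path `x₀ — x₁ — ⋯ — x_{k-1}`, and integrating out its free end one variable at a time costs a factor
`sup_b ∫₀¹ |a - b| ^ γ da ≤ 1 + ∫₋₁¹ |u| ^ γ du < ∞` per edge.
-/

open MeasureTheory Set

section

open Finset

theorem Real.prod_rpow_one_sub_inv_card_le_mean_prod_erase {ι : Type*} [Fintype ι]
    [DecidableEq ι] [Nonempty ι] {b : ι → ℝ} (hb : ∀ i, 0 ≤ b i) :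
    ∏ j, b j ^ (1 - (Fintype.card ι : ℝ)⁻¹) ≤
      (Fintype.card ι : ℝ)⁻¹ * ∑ i, ∏ j ∈ univ.erase i, b j := by
  have hk : (Fintype.card ι : ℝ) ≠ 0 := by positivity
  have hmean := Real.geom_mean_le_arith_mean_weighted univ (fun _ ↦ (Fintype.card ι : ℝ)⁻¹)
    (fun i ↦ ∏ j ∈ univ.erase i, b j) (fun _ _ ↦ by positivity)
    (by simp [hk]) (fun i _ ↦ prod_nonneg fun j _ ↦ hb j)
  rw [mul_sum]
  convert hmean using 1
  calc ∏ j, b j ^ (1 - (Fintype.card ι : ℝ)⁻¹)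
      = ∏ j, (b j ^ (Fintype.card ι : ℝ)⁻¹) ^ (Fintype.card ι - 1) := by
        refine prod_congr rfl fun j _ ↦ ?_
        rw [← Real.rpow_natCast, ← Real.rpow_mul (hb j), Nat.cast_pred Fintype.card_pos]
        field_simp
    _ = ∏ j, ∏ i ∈ univ.erase j, b j ^ (Fintype.card ι : ℝ)⁻¹ := by
        simp [prod_const, card_erase_of_mem]
    _ = ∏ i, ∏ j ∈ univ.erase i, b j ^ (Fintype.card ι : ℝ)⁻¹ :=
        prod_comm' (by simp [and_comm, eq_comm])
    _ = ∏ i, (∏ j ∈ univ.erase i, b j) ^ (Fintype.card ι : ℝ)⁻¹ :=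
        prod_congr rfl fun i _ ↦ Real.finsetProd_rpow _ _ (fun j _ ↦ hb j) _

theorem Fin.prod_univ_erase_eq_prod_castSucc_add {M : Type*} [CommMonoid M] {n : ℕ}
    (F : Fin (n + 1) → M) (i : Fin (n + 1)) :
    ∏ j ∈ univ.erase i, F j = ∏ r : Fin n, F (r.castSucc + (i + 1)) := by
  have hlast : Fin.last n + (i + 1) = i := by rw [add_left_comm, Fin.last_add_one, add_zero]
  have hcast : univ.map Fin.castSuccEmb = univ.erase (Fin.last n) := by
    rw [map_eq_image]; ext; simp [Fin.image_castSucc]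
  let e := (Equiv.addRight (i + 1)).toEmbedding
  calc ∏ j ∈ univ.erase i, F j = ∏ j ∈ (univ.erase (Fin.last n)).map e, F j := by
        rw [map_erase, map_univ_equiv]
        simp only [e, Equiv.coe_toEmbedding, Equiv.coe_addRight, hlast]
    _ = ∏ j ∈ univ.map Fin.castSuccEmb, F (j + (i + 1)) := by rw [prod_map, hcast]; rfl
    _ = ∏ r : Fin n, F (r.castSucc + (i + 1)) := prod_map _ _ _

end

section

variable {α : Type*} [MeasurableSpace α] (μ : Measure α) [SigmaFinite μ]

theorem lintegral_prod_chain_le {f : α → α → ENNReal} (hf : Measurable (Function.uncurry f))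
    {C : ENNReal} (hC : ∀ b, ∫⁻ a, f a b ∂μ ≤ C) (n : ℕ) :
    ∫⁻ x : Fin (n + 1) → α, ∏ i : Fin n, f (x i.castSucc) (x i.succ) ∂Measure.pi (fun _ ↦ μ)
      ≤ C ^ n * μ univ := by
  induction n with
  | zero => simp [Measure.pi_univ]
  | succ n ih =>
    have hchain : Measurable fun x : Fin (n + 1) → α ↦ ∏ i : Fin n, f (x i.castSucc) (x i.succ) :=
      by fun_prop
    rw [← (measurePreserving_piFinSuccAbove (fun _ ↦ μ) 0).symm.lintegral_comp_emb
      (MeasurableEquiv.measurableEmbedding _)]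
    simp only [MeasurableEquiv.piFinSuccAbove_symm_apply, Fin.insertNthEquiv_zero,
      Fin.consEquiv_apply, Fin.prod_univ_succ, Fin.cons_zero, Fin.cons_succ, Fin.castSucc_zero,
      Fin.castSucc_succ]
    rw [lintegral_prod_symm _ (by fun_prop)]
    calc ∫⁻ y, ∫⁻ t, f t (y 0) * ∏ i : Fin n, f (y i.castSucc) (y i.succ) ∂μ ∂Measure.pi (fun _ ↦ μ)
        = ∫⁻ y, (∫⁻ t, f t (y 0) ∂μ) * ∏ i : Fin n, f (y i.castSucc) (y i.succ)
            ∂Measure.pi (fun _ ↦ μ) :=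
          lintegral_congr fun y ↦ lintegral_mul_const _ (by fun_prop)
      _ ≤ ∫⁻ y, C * ∏ i : Fin n, f (y i.castSucc) (y i.succ) ∂Measure.pi (fun _ ↦ μ) :=
          lintegral_mono fun y ↦ mul_le_mul_left (hC _) _
      _ ≤ C * (C ^ n * μ univ) := by
          rw [lintegral_const_mul _ hchain]
          exact mul_le_mul_right ih _
      _ = C ^ (n + 1) * μ univ := by ring

theorem measurePreserving_comp_addRight {n : ℕ} (c : Fin (n + 1)) :
    MeasurePreserving (fun (x : Fin (n + 1) → α) r ↦ x (r + c)) (Measure.pi fun _ ↦ μ)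
      (Measure.pi fun _ ↦ μ) := by
  convert measurePreserving_arrowCongr' (fun _ ↦ μ) (fun _ ↦ μ) (Equiv.addRight c).symm
    (MeasurableEquiv.refl α) fun _ ↦ MeasurePreserving.id μ
  simp [MeasurableEquiv.arrowCongr']

end

theorem ofReal_abs_rpow_le_one_add_indicator {γ : ℝ} (hγ : γ ≤ 0) (u : ℝ) :
    ENNReal.ofReal (|u| ^ γ) ≤ 1 + (Icc (-1) 1).indicator (fun v ↦ ENNReal.ofReal (|v| ^ γ)) u := by
  by_cases hu : u ∈ Icc (-1 : ℝ) 1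
  · simp [hu]
  · have : 1 ≤ |u| := by
      rw [mem_Icc, ← abs_le] at hu
      linarith
    simp [hu, Real.rpow_le_one_of_one_le_of_nonpos this hγ]

theorem lintegral_Icc_abs_sub_rpow_le {γ : ℝ} (hγ : γ ≤ 0) (b : ℝ) :
    ∫⁻ a in Icc (0 : ℝ) 1, ENNReal.ofReal (|a - b| ^ γ)
      ≤ 1 + ∫⁻ u in Icc (-1 : ℝ) 1, ENNReal.ofReal (|u| ^ γ) := by
  set g := (Icc (-1 : ℝ) 1).indicator fun v ↦ ENNReal.ofReal (|v| ^ γ)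
  calc ∫⁻ a in Icc (0 : ℝ) 1, ENNReal.ofReal (|a - b| ^ γ)
      ≤ ∫⁻ a in Icc (0 : ℝ) 1, (1 + g (a - b)) :=
        lintegral_mono fun a ↦ ofReal_abs_rpow_le_one_add_indicator hγ _
    _ ≤ 1 + ∫⁻ a, g (a - b) := by
        rw [lintegral_add_left measurable_const, setLIntegral_const, one_mul, Real.volume_Icc,
          sub_zero, ENNReal.ofReal_one]
        gcongr
        exact Measure.restrict_le_self
    _ = 1 + ∫⁻ u in Icc (-1 : ℝ) 1, ENNReal.ofReal (|u| ^ γ) := by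
        rw [lintegral_sub_right_eq_self g b, lintegral_indicator measurableSet_Icc]

theorem lintegral_Icc_abs_rpow_lt_top {γ : ℝ} (hγ : -1 < γ) :
    ∫⁻ u in Icc (-1 : ℝ) 1, ENNReal.ofReal (|u| ^ γ) < ⊤ := by
  have hloc : LocallyIntegrable (fun u : ℝ ↦ |u| ^ γ) :=
    locallyIntegrable_of_norm_le_rpow (C := 1) (α := -γ) (by simp) (by simp; linarith)
      (ae_of_all _ fun u ↦ by simp [abs_of_nonneg (Real.rpow_nonneg (abs_nonneg u) γ)])
      (by fun_prop : Measurable fun u : ℝ ↦ |u| ^ γ).aestronglyMeasurable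
  exact (hloc.integrableOn_isCompact isCompact_Icc).lintegral_lt_top

theorem integrable_prod_abs_sub_rpow_chain {γ : ℝ} (hγ : -1 < γ) (hγ₀ : γ ≤ 0) (n : ℕ) :
    Integrable (fun x : Fin (n + 1) → ℝ ↦ ∏ i : Fin n, |x i.castSucc - x i.succ| ^ γ)
      (Measure.pi fun _ ↦ volume.restrict (Icc (0 : ℝ) 1)) := by
  refine ⟨(by fun_prop : Measurable _).aestronglyMeasurable, ?_⟩
  rw [hasFiniteIntegral_iff_ofReal (ae_of_all _ fun x ↦ by positivity)]
  simp_rw [ENNReal.ofReal_prod_of_nonneg fun i _ ↦ Real.rpow_nonneg (abs_nonneg _) γ]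
  refine (lintegral_prod_chain_le _ (f := fun a b ↦ ENNReal.ofReal (|a - b| ^ γ)) (by fun_prop)
    (lintegral_Icc_abs_sub_rpow_le hγ₀) n).trans_lt ?_
  exact ENNReal.mul_lt_top (ENNReal.pow_lt_top (ENNReal.add_lt_top.2
    ⟨ENNReal.one_lt_top, lintegral_Icc_abs_rpow_lt_top hγ⟩)) (measure_lt_top _ _)

theorem integrable_prod_erase_abs_sub_rpow {γ : ℝ} (hγ : -1 < γ) (hγ₀ : γ ≤ 0) {n : ℕ}
    (i : Fin (n + 1)) :
    Integrable (fun x : Fin (n + 1) → ℝ ↦ ∏ j ∈ Finset.univ.erase i, |x j - x (j + 1)| ^ γ)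
      (Measure.pi fun _ ↦ volume.restrict (Icc (0 : ℝ) 1)) := by
  have hrot := measurePreserving_comp_addRight (volume.restrict (Icc (0 : ℝ) 1)) (i + 1)
  have hchain := integrable_prod_abs_sub_rpow_chain hγ hγ₀ n
  convert (hrot.integrable_comp hchain.aestronglyMeasurable).2 hchain using 2
  simp [Fin.prod_univ_erase_eq_prod_castSucc_add, ← Fin.coeSucc_eq_succ, add_right_comm]

theorem stmt7 (H : ℝ) (hH : H ∈ Set.Ioo (3/4 : ℝ) 1) (k : ℕ) (hk : 2 ≤ k) :
    MeasureTheory.IntegrableOn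
      (fun x : Fin k → ℝ =>
        ∏ j : Fin k, |x j - x ⟨(j.val + 1) % k, Nat.mod_lt _ (by omega)⟩| ^ (2*H - 2))
      (Set.univ.pi fun _ => Set.Icc (0:ℝ) 1) := by
  obtain ⟨n, rfl⟩ : ∃ n, k = n + 1 := ⟨k - 1, by omega⟩
  have hn : (1 : ℝ) ≤ n := by exact_mod_cast (by omega : 1 ≤ n)
  obtain ⟨hH₁, hH₂⟩ := hH
  set γ := (2 * H - 2) * (n + 1) / n
  have hγ : -1 < γ := by
    rw [lt_div_iff₀ (by linarith)]; nlinarith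
  have hγ₀ : γ ≤ 0 := div_nonpos_of_nonpos_of_nonneg (by nlinarith) (by linarith)
  have hβ : 2 * H - 2 = γ * (1 - (Fintype.card (Fin (n + 1)) : ℝ)⁻¹) := by
    simp only [γ, Fintype.card_fin, Nat.cast_add, Nat.cast_one]
    field_simp
    ring
  have hsucc (j : Fin (n + 1)) :
      (⟨(j.val + 1) % (n + 1), Nat.mod_lt _ (by omega)⟩ : Fin (n + 1)) = j + 1 :=
    Fin.ext (by simp [Fin.val_add])
  rw [IntegrableOn, volume_pi, Measure.restrict_pi_pi]
  refine Integrable.mono' ((integrable_finsetSum Finset.univ fun i _ ↦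
    integrable_prod_erase_abs_sub_rpow hγ hγ₀ i).const_mul (Fintype.card (Fin (n + 1)) : ℝ)⁻¹)
    (by fun_prop : Measurable _).aestronglyMeasurable (ae_of_all _ fun x ↦ ?_)
  rw [Real.norm_of_nonneg (by positivity)]
  simpa [hsucc, hβ, Real.rpow_mul] using
    Real.prod_rpow_one_sub_inv_card_le_mean_prod_erase (b := fun j ↦ |x j - x (j + 1)| ^ γ)
      fun j ↦ by positivity
end

section
/- Let g : [0,1] → ℝ be m-times continuously differentiable with g and all derivatives extended by 0 outside [0,1] (i.e., g is C^m and supported in [0,1] with ∫₀¹ t^p g(t) dt permitted arbitrary). Then for every integer a ≥ 1, |(1/a)Σ_{k=0}^{a-1} g(k/a) - ∫₀¹ g(t) dt| ≤ sup_{t∈[0,1]} |g^{(m)}(t)| · a^{-m}. -/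
/-!
Cut `[0, 1]` into the cells `[k/a, (k+1)/a]`, rescale each to `[0, 1]` and integrate by parts
repeatedly against the kernels `φ₀(x) = 1 - x`, `φ_{j+1} = ∫₀ˣ (φ_j - ∫₀¹ φ_j)`, which vanish
at `0` and `1` from `j = 1` on. The first integration by parts writes the error of the left
Riemann sum as `a⁻² ∑ₖ ∫₀¹ φ₀(s) g'((k+s)/a) ds`. Each further one gains a factor `-1/a`: the
boundary terms vanish, and the mean terms add up to a multiple of `∫₀¹ g^{(j+1)} = 0`, since the
derivatives of `g` vanish at `0` and `1`. Finally `|φ_j| ≤ 1` on `[0, 1]`.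
-/

open intervalIntegral Finset Set

noncomputable def emKernel : ℕ → ℝ → ℝ
  | 0 => fun x => 1 - x
  | j + 1 => fun x => ∫ s in (0:ℝ)..x, (emKernel j s - ∫ u in (0:ℝ)..1, emKernel j u)

namespace emKernel

lemma continuous (j : ℕ) : Continuous (emKernel j) := by
  induction j with
  | zero => exact continuous_const.sub continuous_id
  | succ j ih =>
    exact continuous_primitive (fun _ _ => ((ih.sub continuous_const).intervalIntegrable _ _)) 0

lemma hasDerivAt_succ (j : ℕ) (x : ℝ) :
    HasDerivAt (emKernel (j + 1)) (emKernel j x - ∫ u in (0:ℝ)..1, emKernel j u) x :=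
  ((continuous j).sub continuous_const).integral_hasStrictDerivAt 0 x |>.hasDerivAt

@[simp] lemma succ_zero (j : ℕ) : emKernel (j + 1) 0 = 0 := by
  simp [emKernel]

@[simp] lemma succ_one (j : ℕ) : emKernel (j + 1) 1 = 0 := by
  simp [emKernel, integral_sub ((continuous j).intervalIntegrable 0 1) intervalIntegrable_const]

/-- `φ_{j+1}` vanishes at both ends and has slope at most `2` in absolute value,
so it is bounded by `2 x` and by `2 (1 - x)`. -/
lemma abs_le_one (j : ℕ) {x : ℝ} (hx : x ∈ Icc (0:ℝ) 1) : |emKernel j x| ≤ 1 := by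
  induction j generalizing x with
  | zero =>
    simp only [emKernel]
    rw [abs_le]; constructor <;> linarith [hx.1, hx.2]
  | succ j ih =>
    set c := ∫ u in (0:ℝ)..1, emKernel j u
    have hc : |c| ≤ 1 := by
      have := norm_integral_le_of_norm_le_const (a := 0) (b := 1) (f := emKernel j)
        fun y hy => ih (Ioc_subset_Icc_self (by simpa using hy))
      simpa using this
    have hdiff : ∀ y ∈ Icc (0:ℝ) 1, ‖emKernel j y - c‖ ≤ 2 := fun y hy =>
      (norm_sub_le _ _).trans (by rw [Real.norm_eq_abs, Real.norm_eq_abs]; linarith [ih hy])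
    have hint : ∀ a b : ℝ,
        IntervalIntegrable (fun s => emKernel j s - c) MeasureTheory.volume a b :=
      fun _ _ => ((continuous j).sub continuous_const).intervalIntegrable _ _
    have hleft : |emKernel (j + 1) x| ≤ 2 * x := by
      have := norm_integral_le_of_norm_le_const (a := 0) (b := x) (f := fun s => emKernel j s - c)
        fun y hy => hdiff y ⟨(uIoc_of_le hx.1 ▸ hy).1.le, ((uIoc_of_le hx.1 ▸ hy).2.trans hx.2)⟩
      simpa [emKernel, abs_of_nonneg hx.1] using this
    have hright : |emKernel (j + 1) x| ≤ 2 * (1 - x) := by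
      have hx1 : emKernel (j + 1) x = ∫ s in (1:ℝ)..x, (emKernel j s - c) := by
        have h1 : ∫ s in (0:ℝ)..1, (emKernel j s - c) = 0 := succ_one j
        rw [← integral_interval_sub_left (hint 0 x) (hint 0 1), h1, sub_zero]
        rfl
      have := norm_integral_le_of_norm_le_const (a := 1) (b := x) (f := fun s => emKernel j s - c)
        fun y hy => hdiff y ⟨hx.1.trans (uIoc_of_ge hx.2 ▸ hy).1.le, (uIoc_of_ge hx.2 ▸ hy).2⟩
      rw [hx1]
      simpa [abs_of_nonpos (sub_nonpos.2 hx.2)] using this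
    rw [abs_le] at hleft hright ⊢
    constructor <;> cases le_total x (1/2) <;> linarith [hleft.1, hright.1, hleft.2, hright.2]

end emKernel

lemma integral_emKernel_zero_mul {v v' : ℝ → ℝ} (hv : ∀ x, HasDerivAt v (v' x) x)
    (hv' : Continuous v') :
    ∫ s in (0:ℝ)..1, emKernel 0 s * v' s = (∫ s in (0:ℝ)..1, v s) - v 0 := by
  have hu : ∀ x ∈ uIcc (0:ℝ) 1, HasDerivAt (emKernel 0) (-1) x := fun x _ =>
    (hasDerivAt_id' x).const_sub 1
  rw [integral_mul_deriv_eq_deriv_mul hu (fun x _ => hv x) intervalIntegrable_const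
    (hv'.intervalIntegrable _ _)]
  simp [emKernel, intervalIntegral.integral_neg]
  ring

lemma integral_emKernel_mul {v v' : ℝ → ℝ} (hv : ∀ x, HasDerivAt v (v' x) x)
    (hv' : Continuous v') (j : ℕ) :
    ∫ s in (0:ℝ)..1, emKernel j s * v s =
      (∫ u in (0:ℝ)..1, emKernel j u) * (∫ s in (0:ℝ)..1, v s)
        - ∫ s in (0:ℝ)..1, emKernel (j + 1) s * v' s := by
  have hvc : Continuous v := continuous_iff_continuousAt.2 fun x => (hv x).continuousAt
  rw [integral_mul_deriv_eq_deriv_mul (fun x _ => emKernel.hasDerivAt_succ j x) (fun x _ => hv x)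
    (((emKernel.continuous j).sub continuous_const).intervalIntegrable _ _)
    (hv'.intervalIntegrable _ _)]
  have hmean : ∫ s in (0:ℝ)..1, (emKernel j s - ∫ u in (0:ℝ)..1, emKernel j u) * v s =
      (∫ s in (0:ℝ)..1, emKernel j s * v s)
        - (∫ u in (0:ℝ)..1, emKernel j u) * ∫ s in (0:ℝ)..1, v s := by
    simp_rw [sub_mul]
    rw [integral_sub, integral_const_mul]
    · exact ((emKernel.continuous j).mul hvc).intervalIntegrable _ _
    · exact (continuous_const.mul hvc).intervalIntegrable _ _
  rw [hmean, emKernel.succ_zero, emKernel.succ_one]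
  ring

lemma support_iteratedDeriv_subset_of_isClosed {𝕜 F : Type*} [NontriviallyNormedField 𝕜]
    [NormedAddCommGroup F] [NormedSpace 𝕜 F] {f : 𝕜 → F} {K : Set 𝕜} (hK : IsClosed K)
    (hf : Function.support f ⊆ K) (j : ℕ) : Function.support (iteratedDeriv j f) ⊆ K := by
  induction j with
  | zero => simpa using hf
  | succ j ih =>
    rw [iteratedDeriv_succ]
    exact (support_deriv_subset).trans (closure_minimal ih hK)

lemma Continuous.eq_zero_of_support_subset_Icc {f : ℝ → ℝ} (hf : Continuous f) {a b : ℝ}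
    (h : Function.support f ⊆ Icc a b) : f a = 0 ∧ f b = 0 := by
  have hzero : {x | f x ≠ 0} ⊆ Icc a b := h
  have hclosed : IsClosed {x | f x = 0} := isClosed_eq hf continuous_const
  constructor
  · have : Iio a ⊆ {x | f x = 0} := fun x hx =>
      not_not.1 fun hfx => absurd (hzero hfx).1 (not_le.2 hx)
    exact hclosed.closure_subset_iff.2 this (by simp)
  · have : Ioi b ⊆ {x | f x = 0} := fun x hx =>
      not_not.1 fun hfx => absurd (hzero hfx).2 (not_le.2 hx)
    exact hclosed.closure_subset_iff.2 this (by simp)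

lemma ContDiff.hasDerivAt_iteratedDeriv {g : ℝ → ℝ} {n : WithTop ℕ∞} (hg : ContDiff ℝ n g)
    {j : ℕ} (hj : (j : WithTop ℕ∞) < n) (x : ℝ) :
    HasDerivAt (iteratedDeriv j g) (iteratedDeriv (j + 1) g x) x := by
  rw [iteratedDeriv_succ]
  exact ((hg.differentiable_iteratedDeriv j hj) x).hasDerivAt

lemma integral_iteratedDeriv_eq_zero_of_support_subset {g : ℝ → ℝ} {n : WithTop ℕ∞}
    (hg : ContDiff ℝ n g) (hsupp : Function.support g ⊆ Icc 0 1) {j : ℕ}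
    (hj : ((j + 1 : ℕ) : WithTop ℕ∞) ≤ n) :
    ∫ t in (0:ℝ)..1, iteratedDeriv (j + 1) g t = 0 := by
  have hlt : (j : WithTop ℕ∞) < n := lt_of_lt_of_le (by exact_mod_cast j.lt_succ_self) hj
  obtain ⟨h0, h1⟩ := (hg.continuous_iteratedDeriv j hlt.le).eq_zero_of_support_subset_Icc
    (support_iteratedDeriv_subset_of_isClosed isClosed_Icc hsupp j)
  rw [integral_eq_sub_of_hasDerivAt (fun x _ => hg.hasDerivAt_iteratedDeriv hlt x)
    ((hg.continuous_iteratedDeriv _ hj).intervalIntegrable _ _), h0, h1, sub_zero]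

lemma hasDerivAt_comp_add_div {F F' : ℝ → ℝ} (hF : ∀ x, HasDerivAt F (F' x) x) (c a s : ℝ) :
    HasDerivAt (fun s => F ((c + s) / a)) (F' ((c + s) / a) / a) s :=
  ((hF ((c + s) / a)).comp s (((hasDerivAt_id' s).const_add c).div_const a)).congr_deriv
    (by ring)

lemma sum_integral_comp_add_div {G : ℝ → ℝ} (hG : Continuous G) {a : ℕ} (ha : a ≠ 0) :
    ∑ k ∈ range a, ∫ s in (0:ℝ)..1, G ((k + s) / a) = a * ∫ t in (0:ℝ)..1, G t := by
  have ha' : (a : ℝ) ≠ 0 := Nat.cast_ne_zero.2 ha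
  have hk : ∀ k : ℕ, ∫ s in (0:ℝ)..1, G ((k + s) / a)
      = a * ∫ t in (k / a : ℝ)..((k + 1 : ℕ) / a), G t := by
    intro k
    simp_rw [add_div]
    rw [integral_comp_add_div G ha', smul_eq_mul]
    push_cast
    ring_nf
  simp_rw [hk, ← mul_sum]
  rw [sum_integral_adjacent_intervals (a := fun k : ℕ => (k : ℝ) / a)
    fun k _ => hG.intervalIntegrable _ _]
  simp [ha']

noncomputable def kernelSum (g : ℝ → ℝ) (a j : ℕ) : ℝ :=
  ∑ k ∈ range a, ∫ s in (0:ℝ)..1, emKernel j s * iteratedDeriv (j + 1) g ((k + s) / a)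

section kernelSum

variable {g : ℝ → ℝ} {a : ℕ}

lemma integral_sub_riemannSum_eq_kernelSum (hg : ContDiff ℝ 1 g) (ha : a ≠ 0) :
    (∫ t in (0:ℝ)..1, g t) - 1 / (a:ℝ) * ∑ k ∈ range a, g ((k:ℝ) / a)
      = ((a:ℝ) ^ 2)⁻¹ * kernelSum g a 0 := by
  have ha' : (a : ℝ) ≠ 0 := Nat.cast_ne_zero.2 ha
  have hderiv : ∀ x, HasDerivAt g (iteratedDeriv 1 g x) x := fun x => by
    simpa using hg.hasDerivAt_iteratedDeriv (j := 0) (by norm_num) x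
  have hk : ∀ k : ℕ, ∫ s in (0:ℝ)..1, emKernel 0 s * iteratedDeriv 1 g ((k + s) / a)
      = a * ((∫ s in (0:ℝ)..1, g ((k + s) / a)) - g (k / a)) := by
    intro k
    have := integral_emKernel_zero_mul (hasDerivAt_comp_add_div hderiv k a)
      (((hg.continuous_iteratedDeriv 1 le_rfl).comp (by fun_prop)).div_const _)
    simp_rw [mul_div_assoc', intervalIntegral.integral_div, add_zero] at this
    rw [← this]
    field_simp
  rw [kernelSum]
  simp_rw [hk, ← mul_sum, sum_sub_distrib,
    sum_integral_comp_add_div hg.continuous ha]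
  field_simp

lemma kernelSum_eq_neg_inv_mul_kernelSum_succ {j : ℕ} (hg : ContDiff ℝ (j + 2) g)
    (hsupp : Function.support g ⊆ Icc 0 1) (ha : a ≠ 0) :
    kernelSum g a j = -(a:ℝ)⁻¹ * kernelSum g a (j + 1) := by
  have hderiv : ∀ x, HasDerivAt (iteratedDeriv (j + 1) g) (iteratedDeriv (j + 2) g x) x :=
    hg.hasDerivAt_iteratedDeriv (by norm_cast; omega)
  have hk : ∀ k : ℕ, ∫ s in (0:ℝ)..1, emKernel j s * iteratedDeriv (j + 1) g ((k + s) / a)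
      = (∫ u in (0:ℝ)..1, emKernel j u)
          * (∫ s in (0:ℝ)..1, iteratedDeriv (j + 1) g ((k + s) / a))
        - (a:ℝ)⁻¹
          * ∫ s in (0:ℝ)..1, emKernel (j + 1) s * iteratedDeriv (j + 2) g ((k + s) / a) := by
    intro k
    rw [integral_emKernel_mul (hasDerivAt_comp_add_div hderiv k a)
      (((hg.continuous_iteratedDeriv (j + 2) le_rfl).comp (by fun_prop)).div_const _)]
    simp_rw [mul_div_assoc', intervalIntegral.integral_div]
    ring
  rw [kernelSum, kernelSum]
  simp_rw [hk, sum_sub_distrib, ← mul_sum,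
    sum_integral_comp_add_div (hg.continuous_iteratedDeriv (j + 1) (by norm_cast; omega)) ha]
  rw [integral_iteratedDeriv_eq_zero_of_support_subset hg hsupp (by norm_cast; omega)]
  ring

lemma kernelSum_zero_eq {n : ℕ} (hg : ContDiff ℝ (n + 1) g)
    (hsupp : Function.support g ⊆ Icc 0 1) (ha : a ≠ 0) :
    kernelSum g a 0 = (-(a:ℝ)⁻¹) ^ n * kernelSum g a n := by
  induction n with
  | zero => simp
  | succ n ih =>
    rw [ih hg.of_succ, kernelSum_eq_neg_inv_mul_kernelSum_succ hg hsupp ha]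
    ring

lemma abs_kernelSum_le {j : ℕ} {C : ℝ}
    (hC : ∀ t ∈ Icc (0:ℝ) 1, |iteratedDeriv (j + 1) g t| ≤ C) :
    |kernelSum g a j| ≤ a * C := by
  have hterm : ∀ k < a,
      |∫ s in (0:ℝ)..1, emKernel j s * iteratedDeriv (j + 1) g ((k + s) / a)| ≤ C := by
    intro k hk
    have hbound : ∀ s ∈ uIoc (0:ℝ) 1,
        ‖emKernel j s * iteratedDeriv (j + 1) g ((k + s) / a)‖ ≤ C := by
      intro s hs
      rw [uIoc_of_le zero_le_one] at hs
      have hnode : (k + s) / a ∈ Icc (0:ℝ) 1 := by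
        have : (k:ℝ) + 1 ≤ a := by exact_mod_cast hk
        constructor
        · exact div_nonneg (by linarith [hs.1]) (Nat.cast_nonneg a)
        · rw [div_le_one (by linarith [hs.1])]
          linarith [hs.2]
      rw [Real.norm_eq_abs, abs_mul]
      exact (mul_le_of_le_one_left (abs_nonneg _)
        (emKernel.abs_le_one j (Ioc_subset_Icc_self hs))).trans (hC _ hnode)
    simpa using norm_integral_le_of_norm_le_const hbound
  calc |kernelSum g a j| ≤ ∑ k ∈ range a, C :=
        (abs_sum_le_sum_abs _ _).trans (sum_le_sum fun k hk => hterm k (mem_range.1 hk))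
    _ = a * C := by simp

end kernelSum

theorem stmt10 (m : ℕ) (hm : 1 ≤ m) (g : ℝ → ℝ) (hg : ContDiff ℝ (m : ℕ∞) g)
    (hsupp : Function.support g ⊆ Set.Icc 0 1) (a : ℕ) (ha : 1 ≤ a) :
    |(1 / (a:ℝ)) * ∑ k ∈ Finset.range a, g ((k:ℝ) / a) - ∫ t in (0:ℝ)..1, g t|
      ≤ (⨆ t : Set.Icc (0:ℝ) 1, |iteratedDeriv m g t|) * ((a:ℝ) ^ m)⁻¹ := by
  obtain ⟨n, rfl⟩ : ∃ n, m = n + 1 := ⟨m - 1, by omega⟩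
  have ha0 : a ≠ 0 := by omega
  have hg' : ContDiff ℝ (n + 1) g := by exact_mod_cast hg
  set C := ⨆ t : Set.Icc (0:ℝ) 1, |iteratedDeriv (n + 1) g t|
  have hC : ∀ t ∈ Icc (0:ℝ) 1, |iteratedDeriv (n + 1) g t| ≤ C := by
    have hbdd := isCompact_Icc.bddAbove_image
      (hg'.continuous_iteratedDeriv (n + 1) le_rfl).abs.continuousOn (K := Icc (0:ℝ) 1)
    rw [image_eq_range] at hbdd
    exact fun t ht => le_ciSup hbdd ⟨t, ht⟩
  rw [abs_sub_comm, integral_sub_riemannSum_eq_kernelSum (hg'.of_le (by simp)) ha0,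
    kernelSum_zero_eq hg' hsupp ha0]
  calc |((a:ℝ) ^ 2)⁻¹ * ((-(a:ℝ)⁻¹) ^ n * kernelSum g a n)|
      = ((a:ℝ) ^ 2)⁻¹ * ((a:ℝ)⁻¹) ^ n * |kernelSum g a n| := by
        rw [abs_mul, abs_mul, abs_pow, abs_neg, abs_of_pos (by positivity),
          abs_of_pos (by positivity), mul_assoc]
    _ ≤ ((a:ℝ) ^ 2)⁻¹ * ((a:ℝ)⁻¹) ^ n * (a * C) :=
        mul_le_mul_of_nonneg_left (abs_kernelSum_le hC) (by positivity)
    _ = C * ((a:ℝ) ^ (n + 1))⁻¹ := by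
        rw [inv_pow]
        field_simp
        ring
end

section
/- Let ψ : ℝ → ℝ be continuous with support in [0,1] and Q ≥ 1 vanishing moments (∫₀¹ t^p ψ(t) dt = 0 for p = 0,…,Q-1), and assume ψ is Q-times continuously differentiable on [0,1]. Then there is a constant C (depending on H, Q, ψ) such that for every integer i ≥ 1, |∫₀¹ ψ(t)(i+t)^{2H} dt| ≤ C (1+i)^{2H-Q}. -/
/-!
Expand `t ↦ (i + t) ^ (2H)` around `0` to order `Q - 1` by Taylor's theorem. The vanishing
moments of `ψ` annihilate the Taylor polynomial, so only the Lagrange remainder is integrated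
against `ψ`; it is controlled by the `Q`-th derivative `(2H)(2H - 1)⋯(2H - Q + 1) (i + t) ^ (2H - Q)`,
which is comparable to `(1 + i) ^ (2H - Q)` because `(1 + i) / 2 ≤ i + t ≤ 1 + i`.
-/

open MeasureTheory Set Nat

theorem Real.rpow_le_two_rpow_abs_mul_rpow {a x e : ℝ} (ha : 0 < a) (hax : a / 2 ≤ x)
    (hxa : x ≤ a) : x ^ e ≤ 2 ^ |e| * a ^ e := by
  have hx : 0 < x := by linarith
  rcases le_or_gt 0 e with he | he
  · calc x ^ e ≤ a ^ e := Real.rpow_le_rpow hx.le hxa he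
      _ ≤ 2 ^ |e| * a ^ e :=
        le_mul_of_one_le_left (by positivity) (Real.one_le_rpow one_le_two (abs_nonneg e))
  · calc x ^ e ≤ (a / 2) ^ e := Real.rpow_le_rpow_of_nonpos (by positivity) hax he.le
      _ = 2 ^ |e| * a ^ e := by
        rw [Real.div_rpow ha.le zero_le_two, abs_of_neg he, Real.rpow_neg zero_le_two]
        ring

theorem iteratedDerivWithin_const_add_rpow {s : Set ℝ} (hs : UniqueDiffOn ℝ s) {c r y : ℝ}
    (hy : y ∈ s) (hcy : c + y ≠ 0) (k : ℕ) :
    iteratedDerivWithin k (fun t ↦ (c + t) ^ r) s y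
      = (descPochhammer ℝ k).eval r * (c + y) ^ (r - k) := by
  have hsmooth : ContDiffAt ℝ k (fun t ↦ (c + t) ^ r) y :=
    (Real.contDiffAt_rpow_const_of_ne hcy).comp y (contDiffAt_const.add contDiffAt_id)
  rw [iteratedDerivWithin_eq_iteratedDeriv hs hsmooth hy,
    iteratedDeriv_comp_const_add k (fun x : ℝ ↦ x ^ r), iteratedDeriv_eq_iterate]
  exact Real.iter_deriv_rpow_const r (c + y) k

theorem intervalIntegral_mul_taylorWithinEval_eq_zero {ψ : ℝ → ℝ} {n : ℕ}
    (hψ : IntervalIntegrable ψ volume 0 1)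
    (hmom : ∀ p ≤ n, ∫ t in (0:ℝ)..1, t ^ p * ψ t = 0) (f : ℝ → ℝ) (s : Set ℝ) :
    ∫ t in (0:ℝ)..1, ψ t * taylorWithinEval f n s 0 t = 0 := by
  have hexpand : ∀ t, ψ t * taylorWithinEval f n s 0 t =
      ∑ k ∈ Finset.range (n + 1), iteratedDerivWithin k f s 0 / k ! * (t ^ k * ψ t) := by
    intro t
    rw [taylor_within_apply, Finset.mul_sum]
    refine Finset.sum_congr rfl fun k _ ↦ ?_
    simp only [smul_eq_mul, sub_zero]
    ring
  simp_rw [hexpand]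
  rw [intervalIntegral.integral_finsetSum fun k _ ↦
    (hψ.continuousOn_mul (continuous_pow k).continuousOn).const_mul _]
  refine Finset.sum_eq_zero fun k hk ↦ ?_
  rw [intervalIntegral.integral_const_mul, hmom k (Finset.mem_range_succ_iff.mp hk), mul_zero]

theorem abs_intervalIntegral_mul_le_of_moments_eq_zero {ψ f : ℝ → ℝ} {n : ℕ} {M D : ℝ}
    (hψ : IntervalIntegrable ψ volume 0 1) (hψM : ∀ t ∈ Icc (0:ℝ) 1, |ψ t| ≤ M)
    (hmom : ∀ p ≤ n, ∫ t in (0:ℝ)..1, t ^ p * ψ t = 0)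
    (hf : ContDiffOn ℝ (n + 1) f (Icc 0 1))
    (hD : ∀ t ∈ Icc (0:ℝ) 1, ‖iteratedDerivWithin (n + 1) f (Icc 0 1) t‖ ≤ D) :
    |∫ t in (0:ℝ)..1, ψ t * f t| ≤ M * D / n ! := by
  have hPcont : Continuous (taylorWithinEval f n (Icc 0 1) 0) := by
    simp_rw [funext (taylor_within_apply f n _ 0)]
    fun_prop
  set P := taylorWithinEval f n (Icc 0 1) 0
  have hcancel : ∫ t in (0:ℝ)..1, ψ t * f t = ∫ t in (0:ℝ)..1, ψ t * (f t - P t) := by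
    simp_rw [mul_sub]
    rw [intervalIntegral.integral_sub, intervalIntegral_mul_taylorWithinEval_eq_zero hψ hmom,
      sub_zero]
    · exact hψ.mul_continuousOn (by rw [uIcc_of_le zero_le_one]; exact hf.continuousOn)
    · exact hψ.mul_continuousOn hPcont.continuousOn
  have hbound : ∀ t ∈ uIoc (0:ℝ) 1, ‖ψ t * (f t - P t)‖ ≤ M * D / n ! := by
    intro t ht
    rw [uIoc_of_le zero_le_one] at ht
    have ht' : t ∈ Icc (0:ℝ) 1 := Ioc_subset_Icc_self ht
    have hD0 : 0 ≤ D := (norm_nonneg _).trans (hD t ht')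
    have hrem : ‖f t - P t‖ ≤ D / n ! := by
      calc ‖f t - P t‖ ≤ D * (t - 0) ^ (n + 1) / n ! :=
            taylor_mean_remainder_bound zero_le_one hf ht' hD
        _ ≤ D / n ! := by
            gcongr
            exact mul_le_of_le_one_right hD0 (pow_le_one₀ (by linarith [ht.1]) (by linarith [ht.2]))
    rw [norm_mul, mul_div_assoc]
    exact mul_le_mul (hψM t ht') hrem (norm_nonneg _) ((abs_nonneg _).trans (hψM t ht'))
  rw [hcancel, ← Real.norm_eq_abs]
  simpa using intervalIntegral.norm_integral_le_of_norm_le_const hbound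

theorem stmt11_general (H : ℝ) (Q : ℕ) (hQ : 1 ≤ Q)
    (ψ : ℝ → ℝ) (hψc : Continuous ψ)
    (hmom : ∀ p : ℕ, p < Q → ∫ t in (0:ℝ)..1, t ^ p * ψ t = 0) :
    ∃ C > 0, ∀ i : ℕ, 1 ≤ i →
      |∫ t in (0:ℝ)..1, ψ t * ((i:ℝ) + t) ^ (2*H)|
        ≤ C * (1 + (i:ℝ)) ^ (2*H - (Q:ℝ)) := by
  obtain ⟨n, rfl⟩ : ∃ n, Q = n + 1 := ⟨Q - 1, by omega⟩
  obtain ⟨M, hM⟩ := isCompact_Icc.exists_bound_of_continuousOn (hψc.continuousOn (s := Icc 0 1))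
  have hM0 : 0 ≤ M := (norm_nonneg _).trans (hM 0 ⟨le_rfl, zero_le_one⟩)
  set e : ℝ := 2 * H - (n + 1 : ℕ)
  set A := |(descPochhammer ℝ (n + 1)).eval (2 * H)| * 2 ^ |e|
  refine ⟨M * A / n ! + 1, by positivity, fun i hi ↦ ?_⟩
  have hi1 : (1:ℝ) ≤ i := by exact_mod_cast hi
  have hpos : ∀ t ∈ Icc (0:ℝ) 1, 0 < (i:ℝ) + t := fun t ht ↦ by linarith [ht.1]
  have hsmooth : ContDiffOn ℝ (n + 1) (fun t ↦ ((i:ℝ) + t) ^ (2 * H)) (Icc 0 1) := fun t ht ↦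
    ((Real.contDiffAt_rpow_const_of_ne (hpos t ht).ne').comp t
      (contDiffAt_const.add contDiffAt_id)).contDiffWithinAt
  have hder : ∀ t ∈ Icc (0:ℝ) 1,
      ‖iteratedDerivWithin (n + 1) (fun t ↦ ((i:ℝ) + t) ^ (2 * H)) (Icc 0 1) t‖
        ≤ A * (1 + i) ^ e := by
    intro t ht
    rw [iteratedDerivWithin_const_add_rpow (uniqueDiffOn_Icc zero_lt_one) ht (hpos t ht).ne',
      norm_mul, Real.norm_of_nonneg (Real.rpow_nonneg (hpos t ht).le _), mul_assoc]
    refine mul_le_mul_of_nonneg_left ?_ (abs_nonneg _)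
    rw [add_comm 1]
    exact Real.rpow_le_two_rpow_abs_mul_rpow (by positivity) (by linarith [ht.1])
      (by linarith [ht.2])
  calc |∫ t in (0:ℝ)..1, ψ t * ((i:ℝ) + t) ^ (2 * H)| ≤ M * (A * (1 + i) ^ e) / n ! :=
        abs_intervalIntegral_mul_le_of_moments_eq_zero (hψc.intervalIntegrable 0 1) hM
          (fun p hp ↦ hmom p (by omega)) hsmooth hder
    _ ≤ (M * A / n ! + 1) * (1 + i) ^ e := by
        rw [← mul_assoc, mul_div_right_comm]
        gcongr
        linarith

theorem stmt11 (H : ℝ) (hH : H ∈ Set.Ioo (0:ℝ) 1) (Q : ℕ) (hQ : 1 ≤ Q)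
    (ψ : ℝ → ℝ) (hψc : Continuous ψ) (hψs : Function.support ψ ⊆ Set.Icc 0 1)
    (hψd : ContDiffOn ℝ (Q : ℕ∞) ψ (Set.Icc 0 1))
    (hmom : ∀ p : ℕ, p < Q → ∫ t in (0:ℝ)..1, t ^ p * ψ t = 0) :
    ∃ C > 0, ∀ i : ℕ, 1 ≤ i →
      |∫ t in (0:ℝ)..1, ψ t * ((i:ℝ) + t) ^ (2*H)|
        ≤ C * (1 + (i:ℝ)) ^ (2*H - (Q:ℝ)) :=
  stmt11_general H Q hQ ψ hψc hmom
end
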